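/- arXiv:2111.11569 — 3 statements merged into one kernel-verified Lean document; each statement's English description precedes it below -/
import Mathlib

section
/- Let G be a locally compact, second-countable, Hausdorff abelian topological group with a Haar measure, let D ⊆ G be a closed discrete set, and let c : G → ℂ be a function vanishing outside D such that the weighted Dirac comb with weight function c is a positive definite measure. Then for every subgroup L of G, the function c is positive definite on L; in particular (taking L = G), c is a positive definite function on G. -/
open MeasureTheory
open scoped ComplexOrder

/-- `f` is positive definite on the subset `S` of an additive abelian group. -/
def IsPositiveDefiniteOn {G : Type*} [AddCommGroup G] (f : G → ℂ) (S : Set G) : Prop :=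
  ∀ (n : ℕ) (x : Fin n → G), (∀ k, x k ∈ S) → ∀ c : Fin n → ℂ,
    0 ≤ ∑ k, ∑ l, c k * (starRingEnd ℂ) (c l) * f (x k - x l)

/-- The weighted Dirac comb with weight function `c` is a positive definite measure:
for every continuous compactly supported `φ`, the sum `∑ₓ c(x)·(φ ⋆ φ̃)(x)` is real
and nonnegative, where `φ̃(y) = conj (φ (-y))` and the convolution is w.r.t. `μ`. -/
def DiracCombIsPositiveDefinite {G : Type*} [AddCommGroup G] [TopologicalSpace G]
    [IsTopologicalAddGroup G] [MeasurableSpace G] (μ : Measure G) (c : G → ℂ) : Prop :=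
  ∀ φ : G → ℂ, Continuous φ → HasCompactSupport φ →
    0 ≤ ∑' x : G, c x *
      MeasureTheory.convolution φ (fun y => (starRingEnd ℂ) (φ (-y)))
        (ContinuousLinearMap.mul ℂ ℂ) μ x

/-!
Test the positive definite comb against `φ = ∑ₖ aₖ ψ(· - xₖ)`, where `ψ` is a bump at `0` with
`supp ψ - supp ψ` inside a neighbourhood `W` of `0` so small that each `xₖ - xₗ + W` meets the
closed discrete set `D` at most in `xₖ - xₗ`. Since `φ ⋆ φ̃ = ∑ aₖ āₗ (ψ ⋆ ψ̃)(· - (xₖ - xₗ))` and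
`ψ ⋆ ψ̃` is supported in `W`, the comb only sees the points `xₖ - xₗ`, and the tested quantity is
`(ψ ⋆ ψ̃)(0) · ∑ aₖ āₗ c(xₖ - xₗ)` with `(ψ ⋆ ψ̃)(0) = ∫ |ψ|² > 0`.
-/

open Filter Topology Function
open scoped Pointwise ComplexConjugate Convolution

lemma IsPositiveDefiniteOn.mono {G : Type*} [AddCommGroup G] {f : G → ℂ} {S T : Set G}
    (hf : IsPositiveDefiniteOn f T) (hST : S ⊆ T) : IsPositiveDefiniteOn f S :=
  fun n x hx => hf n x fun k => hST (hx k)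

lemma HasCompactSupport.finsetSum {X M ι : Type*} [TopologicalSpace X] [AddCommMonoid M]
    {s : Finset ι} {f : ι → X → M} (hf : ∀ i ∈ s, HasCompactSupport (f i)) :
    HasCompactSupport (∑ i ∈ s, f i) := by
  classical
  induction s using Finset.induction_on with
  | empty => simpa using HasCompactSupport.zero
  | insert i s hi ih =>
    rw [Finset.sum_insert hi]
    exact (hf i (s.mem_insert_self i)).add (ih fun j hj => hf j (Finset.mem_insert_of_mem hj))

lemma tsum_mul_sum_translate_eq {G ι : Type*} [AddGroup G] [Fintype ι] {c h : G → ℂ} {b : ι → ℂ}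
    {d : ι → G} (hsupp : ∀ i, ∀ z ≠ d i, c z * h (z - d i) = 0) :
    ∑' z, c z * ∑ i, b i * h (z - d i) = h 0 * ∑ i, b i * c (d i) := by
  have hsum : HasSum (fun z => ∑ i, b i * (c z * h (z - d i))) (∑ i, b i * (c (d i) * h 0)) :=
    hasSum_sum fun i _ => by
      simpa using (hasSum_single (f := fun z => c z * h (z - d i)) (d i) (hsupp i)).mul_left (b i)
  rw [Finset.mul_sum]
  convert hsum.tsum_eq using 1
  · exact tsum_congr fun z => by rw [Finset.mul_sum]; exact Finset.sum_congr rfl fun i _ => by ring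
  · exact Finset.sum_congr rfl fun i _ => by ring

section ClosedDiscrete

variable {X : Type*} [TopologicalSpace X] {D : Set X}

lemma IsClosed.eventually_nhds_mem_imp_eq (hD : IsClosed D) (hDd : IsDiscrete D) (x : X) :
    ∀ᶠ z in 𝓝 x, z ∈ D → z = x := by
  have hpunct := isClosed_and_discrete_iff.1 ⟨hD, hDd⟩ x
  rw [disjoint_principal_right, mem_nhdsWithin_iff_eventually] at hpunct
  filter_upwards [hpunct] with z hz hzD
  by_contra hne
  exact hz hne hzD

lemma IsClosed.eventually_nhds_zero_forall_add_mem_imp_eq_zero {G ι : Type*} [AddGroup G]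
    [TopologicalSpace G] [ContinuousAdd G] [Finite ι] {D : Set G} (hD : IsClosed D)
    (hDd : IsDiscrete D) (g : ι → G) :
    ∀ᶠ w in 𝓝 (0 : G), ∀ i, g i + w ∈ D → w = 0 := by
  refine eventually_all.2 fun i => ?_
  have hcont : Tendsto (g i + ·) (𝓝 0) (𝓝 (g i)) :=
    (continuous_const_add (g i)).tendsto' 0 (g i) (add_zero _)
  filter_upwards [hcont.eventually (hD.eventually_nhds_mem_imp_eq hDd (g i))] with w hw hwD
  simpa using hw hwD

end ClosedDiscrete

lemma exists_bump_sub_support_subset {G : Type*} [AddCommGroup G] [TopologicalSpace G]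
    [IsTopologicalAddGroup G] [LocallyCompactSpace G] {W : Set G} (hW : W ∈ 𝓝 0) :
    ∃ ψ : G → ℂ, Continuous ψ ∧ HasCompactSupport ψ ∧ ψ 0 ≠ 0 ∧
      support ψ - support ψ ⊆ W := by
  obtain ⟨V, hV, hVW⟩ := exists_nhds_half_neg hW
  obtain ⟨U, hUV, hUo, hU0⟩ := mem_nhds_iff.1 hV
  obtain ⟨f, hf0, hfc, hfU, -⟩ := exists_continuousMap_one_of_isCompact_subset_isOpen
    isCompact_singleton hUo (Set.singleton_subset_iff.2 hU0)
  have hsupp : support (fun t => (f t : ℂ)) ⊆ V := fun t ht =>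
    hUV (hfU (subset_tsupport _ (by simpa using ht)))
  refine ⟨fun t => (f t : ℂ), by fun_prop, ?_, by simp [hf0 rfl], ?_⟩
  · exact HasCompactSupport.comp_left (g := fun r : ℝ => (r : ℂ)) hfc (by simp)
  · rintro _ ⟨s, hs, t, ht, rfl⟩
    exact hVW s (hsupp hs) t (hsupp ht)

section Autocorrelation

variable {G : Type*} [AddCommGroup G] [MeasurableSpace G] (μ : Measure G)

lemma convolution_mul_conjneg_apply (f g : G → ℂ) (y : G) :
    (f ⋆[ContinuousLinearMap.mul ℂ ℂ, μ] conjneg g) y = ∫ t, f t * conj (g (t - y)) ∂μ := by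
  simp [convolution_def]

lemma convolution_mul_conjneg_eq_zero_of_notMem {f g : G → ℂ} {y : G}
    (hy : y ∉ support f - support g) :
    (f ⋆[ContinuousLinearMap.mul ℂ ℂ, μ] conjneg g) y = 0 := by
  rw [convolution_mul_conjneg_apply]
  refine integral_eq_zero_of_ae (Eventually.of_forall fun t => ?_)
  by_contra hne
  obtain ⟨hf, hg⟩ := mul_ne_zero_iff.1 hne
  exact hy ⟨t, hf, t - y, by simpa using hg, sub_sub_cancel t y⟩

lemma integral_translate_mul_conj_translate [MeasurableAdd G] [μ.IsAddRightInvariant]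
    (f g : G → ℂ) (a b : G) :
    ∫ t, f (t - a) * conj (g (t - b)) ∂μ =
      (f ⋆[ContinuousLinearMap.mul ℂ ℂ, μ] conjneg g) (b - a) := by
  rw [convolution_mul_conjneg_apply, ← integral_add_right_eq_self _ a]
  simp only [add_sub_cancel_right, sub_sub_eq_add_sub]

variable [TopologicalSpace G] [OpensMeasurableSpace G]

lemma convolution_mul_conjneg_self_zero_pos [IsFiniteMeasureOnCompacts μ] [μ.IsOpenPosMeasure]
    {ψ : G → ℂ} (hψ : Continuous ψ) (hψc : HasCompactSupport ψ) {x : G} (hx : ψ x ≠ 0) :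
    0 < (ψ ⋆[ContinuousLinearMap.mul ℂ ℂ, μ] conjneg ψ) 0 := by
  have hnorm : ∀ t, ψ t * conj (ψ t) = ((‖ψ t‖ ^ 2 : ℝ) : ℂ) := fun t => by
    simp [Complex.mul_conj, Complex.normSq_eq_norm_sq]
  simp only [convolution_mul_conjneg_apply, sub_zero, hnorm, integral_complex_ofReal]
  have hcs : HasCompactSupport fun t => ‖ψ t‖ ^ 2 := hψc.norm.comp_left (g := (· ^ 2)) (by simp)
  refine Complex.zero_lt_real.2 <| (hψ.norm.pow 2).integral_pos_of_hasCompactSupport_nonneg_nonzero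
    hcs (fun t => sq_nonneg _) (x := x) ?_
  simpa using hx

lemma convolution_mul_conjneg_sum_translate [IsTopologicalAddGroup G] [MeasurableAdd G]
    [μ.IsAddRightInvariant] [IsFiniteMeasureOnCompacts μ] {ι : Type*} [Fintype ι] {ψ : G → ℂ}
    (hψ : Continuous ψ) (hψc : HasCompactSupport ψ) (a : ι → ℂ) (x : ι → G) (y : G) :
    ((fun t => ∑ k, a k * ψ (t - x k)) ⋆[ContinuousLinearMap.mul ℂ ℂ, μ]
        conjneg (fun t => ∑ k, a k * ψ (t - x k))) y =
      ∑ k, ∑ l, a k * conj (a l) *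
        (ψ ⋆[ContinuousLinearMap.mul ℂ ℂ, μ] conjneg ψ) (y - (x k - x l)) := by
  have hint : ∀ b c : G, Integrable (fun t => ψ (t - b) * conj (ψ (t - c))) μ := fun b c =>
    (by fun_prop : Continuous fun t => ψ (t - b) * conj (ψ (t - c))).integrable_of_hasCompactSupport
      (hψc.comp_homeomorph (Homeomorph.subRight b)).mul_right
  have hexpand : ∀ t, (∑ k, a k * ψ (t - x k)) * conj (∑ l, a l * ψ (t - y - x l)) =
      ∑ k, ∑ l, a k * conj (a l) * (ψ (t - x k) * conj (ψ (t - (y + x l)))) := fun t => by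
    simp only [map_sum, map_mul, Finset.sum_mul_sum, sub_sub]
    exact Finset.sum_congr rfl fun k _ => Finset.sum_congr rfl fun l _ => by ring
  rw [convolution_mul_conjneg_apply]
  simp only [hexpand]
  rw [integral_finsetSum _ fun k _ => integrable_finsetSum _ fun l _ => (hint _ _).const_mul _]
  refine Finset.sum_congr rfl fun k _ => ?_
  rw [integral_finsetSum _ fun l _ => (hint _ _).const_mul _]
  refine Finset.sum_congr rfl fun l _ => ?_
  rw [integral_const_mul, integral_translate_mul_conj_translate, sub_sub_eq_add_sub,
    add_sub_right_comm]

end Autocorrelation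

theorem DiracCombIsPositiveDefinite.isPositiveDefiniteOn_univ {G : Type*} [AddCommGroup G]
    [TopologicalSpace G] [IsTopologicalAddGroup G] [LocallyCompactSpace G] [MeasurableSpace G]
    [BorelSpace G] {μ : Measure G} [μ.IsAddHaarMeasure] {D : Set G} (hD : IsClosed D)
    (hDd : IsDiscrete D) {c : G → ℂ} (hc : ∀ x ∉ D, c x = 0)
    (hpd : DiracCombIsPositiveDefinite μ c) : IsPositiveDefiniteOn c Set.univ := by
  intro n x _ a
  set d : Fin n × Fin n → G := fun p => x p.1 - x p.2
  obtain ⟨ψ, hψ, hψc, hψ0, hψW⟩ :=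
    exists_bump_sub_support_subset (hD.eventually_nhds_zero_forall_add_mem_imp_eq_zero hDd d)
  set φ : G → ℂ := fun t => ∑ k, a k * ψ (t - x k)
  have hφ : Continuous φ := by fun_prop
  have hφc : HasCompactSupport φ := by
    have hφ_eq : φ = ∑ k, fun t => a k * ψ (t - x k) := by
      ext t
      simp [φ]
    rw [hφ_eq]
    exact HasCompactSupport.finsetSum fun k _ =>
      (hψc.comp_homeomorph (Homeomorph.subRight (x k))).mul_left
  have hsupp : ∀ p, ∀ z ≠ d p,
      c z * (ψ ⋆[ContinuousLinearMap.mul ℂ ℂ, μ] conjneg ψ) (z - d p) = 0 := by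
    intro p z hz
    by_cases hzD : z ∈ D
    · refine mul_eq_zero_of_right _ (convolution_mul_conjneg_eq_zero_of_notMem μ fun hmem => hz ?_)
      exact sub_eq_zero.1 (hψW hmem p (by simpa using hzD))
    · rw [hc z hzD, zero_mul]
  have hpos := hpd φ hφ hφc
  change 0 ≤ ∑' z, c z * (φ ⋆[ContinuousLinearMap.mul ℂ ℂ, μ] conjneg φ) z at hpos
  simp only [φ, convolution_mul_conjneg_sum_translate μ hψ hψc, ← Fintype.sum_prod_type'] at hpos
  rw [tsum_mul_sum_translate_eq hsupp, Fintype.sum_prod_type] at hpos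
  have hr := convolution_mul_conjneg_self_zero_pos μ hψ hψc hψ0
  simpa [inv_mul_cancel_left₀ hr.ne'] using mul_nonneg (RCLike.inv_pos_of_pos hr).le hpos

theorem posDef_on_subgroup_of_diracComb_posDef_general {G : Type*}
    [AddCommGroup G] [TopologicalSpace G] [IsTopologicalAddGroup G]
    [LocallyCompactSpace G]
    [MeasurableSpace G] [BorelSpace G]
    (μ : Measure G) [μ.IsAddHaarMeasure]
    (D : Set G) (hDclosed : IsClosed D) (hDdiscrete : DiscreteTopology D)
    (c : G → ℂ) (hc : ∀ x ∉ D, c x = 0)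
    (hpd : DiracCombIsPositiveDefinite μ c) :
    (∀ L : AddSubgroup G, IsPositiveDefiniteOn c (L : Set G)) ∧
      IsPositiveDefiniteOn c Set.univ := by
  have huniv :=
    hpd.isPositiveDefiniteOn_univ hDclosed (isDiscrete_iff_discreteTopology.2 hDdiscrete) hc
  exact ⟨fun L => huniv.mono (Set.subset_univ _), huniv⟩

theorem posDef_on_subgroup_of_diracComb_posDef {G : Type*}
    [AddCommGroup G] [TopologicalSpace G] [IsTopologicalAddGroup G]
    [LocallyCompactSpace G] [SecondCountableTopology G] [T2Space G]
    [MeasurableSpace G] [BorelSpace G]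
    (μ : Measure G) [μ.IsAddHaarMeasure]
    (D : Set G) (hDclosed : IsClosed D) (hDdiscrete : DiscreteTopology D)
    (c : G → ℂ) (hc : ∀ x ∉ D, c x = 0)
    (hpd : DiracCombIsPositiveDefinite μ c) :
    (∀ L : AddSubgroup G, IsPositiveDefiniteOn c (L : Set G)) ∧
      IsPositiveDefiniteOn c Set.univ :=
  posDef_on_subgroup_of_diracComb_posDef_general μ D hDclosed hDdiscrete c hc hpd
end

section
/- Let (G, H, 𝓛) be a cut-and-project scheme, let W ⊆ H be a compact set, and let f : G → ℂ be a function which vanishes outside Λ(W). Define j : G × H → ℂ by j(x, y) := f(x) if (x, y) ∈ 𝓛, and j(x, y) := 0 otherwise. Then f is a positive definite function on G if and only if j is a positive definite function on G × H. -/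
open scoped ComplexOrder

/-- A cut-and-project scheme: two LCA (locally compact, second-countable, Hausdorff)
abelian groups `G`, `H` together with a discrete cocompact subgroup `𝓛` of `G × H`
whose projection to `H` is dense and whose projection to `G` is injective. -/
structure CutAndProjectScheme (G H : Type*)
    [AddCommGroup G] [TopologicalSpace G] [IsTopologicalAddGroup G]
    [LocallyCompactSpace G] [SecondCountableTopology G] [T2Space G]
    [AddCommGroup H] [TopologicalSpace H] [IsTopologicalAddGroup H]
    [LocallyCompactSpace H] [SecondCountableTopology H] [T2Space H] where
  lattice : AddSubgroup (G × H)
  discrete : DiscreteTopology lattice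
  cocompact : CompactSpace ((G × H) ⧸ lattice)
  denseProjH : DenseRange fun p : lattice => (p : G × H).2
  injProjG : Function.Injective fun p : lattice => (p : G × H).1

/-!
Positive definiteness of a function vanishing off a subgroup `K` is decided coset by coset: in
`∑ c_k c̄_l f(x_k - x_l)` only pairs in a common coset of `K` contribute, so the form is the sum of
its restrictions to the cosets. For `j`, the cosets of `𝓛` are handled by projecting to `G`, where
`j` agrees with `f`; for `f`, which vanishes off `L = π_G(𝓛)`, the points of one coset of `L` lift
to points of one coset of `𝓛`, where again `j` agrees with `f`.
-/

open ComplexConjugate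

section KernelQuadForm

variable {G G' : Type*} [AddCommGroup G] [AddCommGroup G'] {n : ℕ}

def kernelQuadForm (f : G → ℂ) (x : Fin n → G) (c : Fin n → ℂ) : ℂ :=
  ∑ k, ∑ l, c k * conj (c l) * f (x k - x l)

theorem kernelQuadForm_congr {f : G → ℂ} {g : G' → ℂ} {x : Fin n → G} {y : Fin n → G'}
    {c : Fin n → ℂ} (h : ∀ k l, c k ≠ 0 → c l ≠ 0 → f (x k - x l) = g (y k - y l)) :
    kernelQuadForm f x c = kernelQuadForm g y c := by
  refine Finset.sum_congr rfl fun k _ => Finset.sum_congr rfl fun l _ => ?_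
  by_cases hk : c k = 0
  · simp [hk]
  by_cases hl : c l = 0
  · simp [hl]
  rw [h k l hk hl]

theorem kernelQuadForm_eq_sum_cosets {K : AddSubgroup G} [DecidableEq (G ⧸ K)] {f : G → ℂ}
    (hf : ∀ x ∉ K, f x = 0) (x : Fin n → G) (c : Fin n → ℂ) :
    kernelQuadForm f x c = ∑ t ∈ Finset.univ.image (fun k => (x k : G ⧸ K)),
      kernelQuadForm f x (fun k => if (x k : G ⧸ K) = t then c k else 0) := by
  unfold kernelQuadForm
  symm
  rw [Finset.sum_comm]
  refine Finset.sum_congr rfl fun k _ => ?_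
  rw [Finset.sum_comm]
  refine Finset.sum_congr rfl fun l _ => ?_
  by_cases hkl : (x k : G ⧸ K) = x l
  · rw [Finset.sum_eq_single_of_mem _ (Finset.mem_image_of_mem _ (Finset.mem_univ k))]
    · simp [hkl]
    · intro t _ ht
      simp [Ne.symm ht]
  · have hzero : f (x k - x l) = 0 := hf _ (mt QuotientAddGroup.eq_iff_sub_mem.mpr hkl)
    simp [hzero]

theorem isPositiveDefiniteOn_univ_iff_of_forall_notMem (K : AddSubgroup G) {f : G → ℂ}
    (hf : ∀ x ∉ K, f x = 0) :
    IsPositiveDefiniteOn f Set.univ ↔ ∀ (n : ℕ) (x : Fin n → G) (c : Fin n → ℂ),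
      (∀ k l, c k ≠ 0 → c l ≠ 0 → x k - x l ∈ K) → 0 ≤ kernelQuadForm f x c := by
  classical
  refine ⟨fun hpd n x c _ => hpd n x (fun _ => Set.mem_univ _) c, fun h n x _ c => ?_⟩
  change 0 ≤ kernelQuadForm f x c
  rw [kernelQuadForm_eq_sum_cosets hf]
  refine Finset.sum_nonneg fun t _ => h n x _ fun k l hk hl => ?_
  rw [← QuotientAddGroup.eq_iff_sub_mem, (ite_ne_right_iff.mp hk).1, (ite_ne_right_iff.mp hl).1]

end KernelQuadForm

section Lift

variable {G H : Type*} [AddCommGroup G] [AddCommGroup H]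

theorem isPositiveDefiniteOn_indicator_fst {f : G → ℂ} (𝓛 : AddSubgroup (G × H))
    (hf : IsPositiveDefiniteOn f Set.univ) :
    IsPositiveDefiniteOn ((𝓛 : Set (G × H)).indicator fun p => f p.1) Set.univ := by
  refine (isPositiveDefiniteOn_univ_iff_of_forall_notMem 𝓛
    fun p hp => Set.indicator_of_notMem hp _).mpr fun n z c hc => ?_
  have hform : kernelQuadForm ((𝓛 : Set (G × H)).indicator fun p => f p.1) z c =
      kernelQuadForm f (fun k => (z k).1) c :=
    kernelQuadForm_congr fun k l hk hl => Set.indicator_of_mem (hc k l hk hl) _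
  exact hform ▸ hf n _ (fun _ => Set.mem_univ _) c

theorem isPositiveDefiniteOn_of_indicator_fst {f : G → ℂ} (𝓛 : AddSubgroup (G × H))
    (hf : ∀ x ∉ 𝓛.map (AddMonoidHom.fst G H), f x = 0)
    (hj : IsPositiveDefiniteOn ((𝓛 : Set (G × H)).indicator fun p => f p.1) Set.univ) :
    IsPositiveDefiniteOn f Set.univ := by
  refine (isPositiveDefiniteOn_univ_iff_of_forall_notMem _ hf).mpr fun n x c hc => ?_
  by_cases hc0 : ∀ k, c k = 0
  · simp [kernelQuadForm, hc0]
  obtain ⟨k₀, hk₀⟩ := not_forall.mp hc0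
  have hlift : ∀ k, ∃ y : H, c k ≠ 0 → (x k - x k₀, y) ∈ 𝓛 := fun k => by
    by_cases hk : c k = 0
    · exact ⟨0, fun h => (h hk).elim⟩
    obtain ⟨p, hp, hpx⟩ := AddSubgroup.mem_map.mp (hc k k₀ hk hk₀)
    exact ⟨p.2, fun _ => by rwa [← hpx]⟩
  choose y hy using hlift
  have hform : kernelQuadForm f x c =
      kernelQuadForm ((𝓛 : Set (G × H)).indicator fun p => f p.1) (fun k => (x k, y k)) c := by
    refine kernelQuadForm_congr fun k l hk hl => ?_
    have hmem : (x k, y k) - (x l, y l) ∈ 𝓛 := by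
      simpa using 𝓛.sub_mem (hy k hk) (hy l hl)
    exact (Set.indicator_of_mem hmem (fun p : G × H => f p.1)).symm
  exact hform ▸ hj n _ (fun _ => Set.mem_univ _) c

end Lift

theorem lift_posDef_function_iff_general {G H : Type*}
    [AddCommGroup G] [TopologicalSpace G] [IsTopologicalAddGroup G]
    [LocallyCompactSpace G] [SecondCountableTopology G] [T2Space G]
    [AddCommGroup H] [TopologicalSpace H] [IsTopologicalAddGroup H]
    [LocallyCompactSpace H] [SecondCountableTopology H] [T2Space H]
    (S : CutAndProjectScheme G H) (W : Set H)
    (f : G → ℂ)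
    (hf : ∀ x : G, x ∉ {x : G | ∃ y ∈ W, (x, y) ∈ S.lattice} → f x = 0) :
    IsPositiveDefiniteOn f Set.univ ↔
      IsPositiveDefiniteOn
        (Set.indicator (S.lattice : Set (G × H)) (fun p => f p.1)) Set.univ := by
  have hfL : ∀ x ∉ S.lattice.map (AddMonoidHom.fst G H), f x = 0 := fun x hx =>
    hf x fun ⟨y, _, hy⟩ => hx (AddSubgroup.mem_map.mpr ⟨(x, y), hy, rfl⟩)
  exact ⟨isPositiveDefiniteOn_indicator_fst S.lattice,
    isPositiveDefiniteOn_of_indicator_fst S.lattice hfL⟩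

theorem lift_posDef_function_iff {G H : Type*}
    [AddCommGroup G] [TopologicalSpace G] [IsTopologicalAddGroup G]
    [LocallyCompactSpace G] [SecondCountableTopology G] [T2Space G]
    [AddCommGroup H] [TopologicalSpace H] [IsTopologicalAddGroup H]
    [LocallyCompactSpace H] [SecondCountableTopology H] [T2Space H]
    (S : CutAndProjectScheme G H) (W : Set H) (hW : IsCompact W)
    (f : G → ℂ)
    (hf : ∀ x : G, x ∉ {x : G | ∃ y ∈ W, (x, y) ∈ S.lattice} → f x = 0) :
    IsPositiveDefiniteOn f Set.univ ↔
      IsPositiveDefiniteOn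
        (Set.indicator (S.lattice : Set (G × H)) (fun p => f p.1)) Set.univ :=
  lift_posDef_function_iff_general S W f hf
end

section
/- Let G be a locally compact, second-countable, Hausdorff abelian topological group with a Haar measure, let Λ ⊆ G be a closed, uniformly discrete set, and let c : G → ℂ be a bounded function vanishing outside Λ. Then c is a positive definite function on G if and only if the weighted Dirac comb with weight function c is a positive definite measure. -/
open MeasureTheory
open scoped ComplexOrder

/-- A set `Λ` in a topological additive group is uniformly discrete if there is an open
neighbourhood `U` of `0` such that every translate `t + U` contains at most one point of `Λ`. -/
def UniformlyDiscrete {G : Type*} [AddCommGroup G] [TopologicalSpace G] (Λ : Set G) : Prop :=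
  ∃ U : Set G, IsOpen U ∧ (0 : G) ∈ U ∧ ∀ t : G, (Λ ∩ ((t + ·) '' U)).Subsingleton

/-!
Positive definite ⟹ positive definite comb: `(φ ⋆ φ̃)(a - b) = ∫ φ(t + a) conj φ(t + b) dt`, so
every quadratic form of `z ↦ c z · (φ ⋆ φ̃)(z)` is an integral of quadratic forms of `c`, and this
product is again positive definite (Schur). It is finitely supported, as `Λ` meets the compact
support of `φ ⋆ φ̃` in finitely many points, and a finitely supported positive definite function
`f` on an abelian group has `∑ f ≥ 0`. For the latter, evaluate the quadratic form of `f` on the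
box `{∑ₛ kₛ • s : kₛ < N}` spanned by the support of `f`: this gives `0 ≤ ∑ₜ A_N(t) f(t)`, where
`A_N(t)` counts pairs of box points with difference `t`, and `A_N(t) / A_N(0) → 1` (Følner).

Positive definite comb ⟹ positive definite: for points `xₖ` and weights `dₖ`, test the comb
against `φ = ∑ dₖ ψ(· - xₖ)`, where the bump `ψ` is so concentrated that
`(ψ ⋆ ψ̃)(z - (xₖ - xₗ))` vanishes at all `z ∈ Λ` other than `xₖ - xₗ`. The comb then evaluates
to `(ψ ⋆ ψ̃)(0) · ∑ dₖ conj dₗ c(xₖ - xₗ)`, and `(ψ ⋆ ψ̃)(0) = ‖ψ‖₂² > 0`.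
-/

open Function Finset Filter Topology
open scoped Pointwise

section Translation

variable {G : Type*} [AddGroup G]

lemma Function.HasFiniteSupport.comp_sub_right {M : Type*} [Zero M] {u : G → M}
    (hu : u.HasFiniteSupport) (t : G) : (fun a => u (a - t)).HasFiniteSupport :=
  hu.fun_comp_of_injective (sub_left_injective (b := t))

lemma finsum_comp_sub_right {M : Type*} [AddCommMonoid M] (F : G → M) (t : G) :
    ∑ᶠ a, F (a - t) = ∑ᶠ a, F a :=
  finsum_comp_equiv (Equiv.subRight t)

end Translation

section DiscreteAutocorrelation

variable {G : Type*} [AddCommGroup G]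

noncomputable def discreteAutocorr (u : G → ℝ) (t : G) : ℝ := ∑ᶠ a, u a * u (a - t)

lemma two_mul_discreteAutocorr_zero_sub {u : G → ℝ} (hu : u.HasFiniteSupport) (e : G) :
    2 * (discreteAutocorr u 0 - discreteAutocorr u e) = ∑ᶠ a, (u a - u (a - e)) ^ 2 := by
  have hue := hu.comp_sub_right e
  have hexp : ∀ a, (u a - u (a - e)) ^ 2
      = u a * u a + u (a - e) * u (a - e) - 2 * (u a * u (a - e)) := fun a => by ring
  rw [finsum_congr hexp, finsum_sub_distrib, finsum_add_distrib, ← mul_finsum,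
    finsum_comp_sub_right (fun a => u a * u a)]
  · simp only [discreteAutocorr, sub_zero]
    ring
  · exact hu.mul_left u
  · exact hue.mul_left _
  · exact (hu.mul_left u).add (hue.mul_left _)
  · exact (hu.mul_left _).mul_right _

lemma discreteAutocorr_le_discreteAutocorr_zero {u : G → ℝ} (hu : u.HasFiniteSupport) (e : G) :
    discreteAutocorr u e ≤ discreteAutocorr u 0 := by
  have h := two_mul_discreteAutocorr_zero_sub hu e
  have : 0 ≤ ∑ᶠ a, (u a - u (a - e)) ^ 2 := finsum_nonneg fun a => sq_nonneg _
  linarith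

/-- `M - M(· - e)` telescopes to `R - R(· - N • e)`, whose squared `ℓ²`-norm is at most
`2 ‖R‖²`; and `‖M‖² ≥ N ‖R‖²`, as `M` is a sum of `N` nonnegative translates of `R`. -/
lemma natCast_mul_discreteAutocorr_sub_le {R M : G → ℝ} (hR : R.HasFiniteSupport) (hR0 : 0 ≤ R)
    {e : G} {N : ℕ} (hM : ∀ a, M a = ∑ r ∈ range N, R (a - r • e)) :
    N * (discreteAutocorr M 0 - discreteAutocorr M e) ≤ discreteAutocorr M 0 := by
  have hRsq : (fun a => R a ^ 2).HasFiniteSupport := hR.fun_comp (g := (· ^ 2)) (by simp)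
  have hMfin : M.HasFiniteSupport := by
    rw [show M = fun a => ∑ r ∈ range N, R (a - r • e) from funext hM]
    exact HasFiniteSupport.sum (fun r => hR.comp_sub_right _) _
  have htelescope : ∀ a, M a - M (a - e) = R a - R (a - N • e) := fun a => by
    calc M a - M (a - e) = ∑ r ∈ range N, (R (a - r • e) - R (a - (r + 1) • e)) := by
          simp only [hM, sum_sub_distrib, succ_nsmul, sub_sub, add_comm e]
      _ = R a - R (a - N • e) := by rw [sum_range_sub']; simp
  have hdefect : discreteAutocorr M 0 - discreteAutocorr M e ≤ ∑ᶠ a, R a ^ 2 := by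
    have hle : ∑ᶠ a, (M a - M (a - e)) ^ 2 ≤ ∑ᶠ a, (R a ^ 2 + R (a - N • e) ^ 2) := by
      refine finsum_le_finsum' ?_ ?_ fun a => ?_
      · exact (hMfin.sub (hMfin.comp_sub_right e)).fun_comp (g := (· ^ 2)) (by simp)
      · exact hRsq.add (hRsq.comp_sub_right _)
      · rw [htelescope]
        nlinarith [mul_nonneg (hR0 a) (hR0 (a - N • e))]
    rw [finsum_add_distrib hRsq (hRsq.comp_sub_right _),
      finsum_comp_sub_right (fun a => R a ^ 2)] at hle
    linarith [two_mul_discreteAutocorr_zero_sub hMfin e]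
  have hmass : N * ∑ᶠ a, R a ^ 2 ≤ discreteAutocorr M 0 := by
    calc (N : ℝ) * ∑ᶠ a, R a ^ 2 = ∑ r ∈ range N, ∑ᶠ a, R (a - r • e) ^ 2 := by
          simp [finsum_comp_sub_right (fun a => R a ^ 2)]
      _ = ∑ᶠ a, ∑ r ∈ range N, R (a - r • e) ^ 2 :=
          (finsum_sum_comm _ _ fun r _ => hRsq.comp_sub_right _).symm
      _ ≤ ∑ᶠ a, M a * M (a - 0) := by
          refine finsum_le_finsum' ?_ ?_ fun a => ?_
          · exact HasFiniteSupport.sum (fun r => hRsq.comp_sub_right _) _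
          · exact hMfin.mul_left _
          · rw [sub_zero, ← sq, hM]
            exact sum_sq_le_sq_sum_of_nonneg fun r _ => hR0 _
  calc (N : ℝ) * (discreteAutocorr M 0 - discreteAutocorr M e)
      ≤ N * ∑ᶠ a, R a ^ 2 := by gcongr
    _ ≤ discreteAutocorr M 0 := hmass

end DiscreteAutocorrelation

section FiberCard

variable {α I J : Type*}

noncomputable def fiberCard (x : I → α) (a : α) : ℕ := Nat.card {i // x i = a}

lemma support_fiberCard_subset (x : I → α) : support (fiberCard x) ⊆ Set.range x := by
  intro a ha
  by_contra h
  exact ha (Nat.card_eq_zero.2 (Or.inl ⟨fun i => h ⟨i.1, i.2⟩⟩))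

lemma hasFiniteSupport_fiberCard [Finite I] (x : I → α) : (fiberCard x).HasFiniteSupport :=
  (Set.finite_range x).subset (support_fiberCard_subset x)

lemma fiberCard_comp_equiv (x : I → α) (σ : J ≃ I) : fiberCard (x ∘ σ) = fiberCard x :=
  funext fun _ => Nat.card_congr (σ.subtypeEquiv fun _ => Iff.rfl)

variable [Fintype I] [Fintype J]

lemma finsum_fiberCard_smul {M : Type*} [AddCommMonoid M] (x : I → α) (F : α → M) :
    ∑ᶠ a, fiberCard x a • F a = ∑ i, F (x i) := by
  classical
  rw [Finset.sum_comp, finsum_eq_sum_of_support_subset (s := univ.image x)]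
  · simp [fiberCard, Fintype.card_subtype]
  · intro a ha
    simpa using support_fiberCard_subset x (support_smul_subset_left _ _ ha)

lemma natCard_subtype_prod (P : I → J → Prop) :
    Nat.card {p : I × J // P p.1 p.2} = ∑ i, Nat.card {j // P i j} := by
  rw [Nat.card_congr (Equiv.subtypeProdEquivSigmaSubtype P), Nat.card_sigma]

variable {G : Type*} [AddCommGroup G]

lemma natCast_fiberCard_sub_eq_discreteAutocorr (x : I → G) (t : G) :
    (fiberCard (fun p : I × I => x p.1 - x p.2) t : ℝ)
      = discreteAutocorr (fun a => (fiberCard x a : ℝ)) t := by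
  have h := finsum_fiberCard_smul x (fun a => (fiberCard x (a - t) : ℝ))
  simp only [nsmul_eq_mul] at h
  rw [discreteAutocorr, h, fiberCard, natCard_subtype_prod (fun k l => x k - x l = t)]
  push_cast
  refine sum_congr rfl fun k _ => congrArg _ (Nat.card_congr (Equiv.subtypeEquivRight fun l => ?_))
  rw [sub_eq_iff_eq_add', eq_sub_iff_add_eq, eq_comm]

lemma discreteAutocorr_fiberCard_zero_pos [Nonempty I] (x : I → G) :
    0 < discreteAutocorr (fun a => (fiberCard x a : ℝ)) 0 := by
  obtain ⟨k⟩ := ‹Nonempty I›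
  rw [← natCast_fiberCard_sub_eq_discreteAutocorr]
  have : Nonempty {p : I × I // x p.1 - x p.2 = 0} := ⟨⟨(k, k), sub_self _⟩⟩
  exact_mod_cast Nat.card_pos

lemma fiberCard_smul_add (y : J → G) (e : G) (N : ℕ) (a : G) :
    fiberCard (fun p : Fin N × J => (p.1 : ℕ) • e + y p.2) a
      = ∑ r ∈ range N, fiberCard y (a - r • e) := by
  rw [fiberCard, natCard_subtype_prod (fun (r : Fin N) k => (r : ℕ) • e + y k = a),
    ← Fin.sum_univ_eq_sum_range (fun r => fiberCard y (a - r • e))]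
  refine sum_congr rfl fun r _ => Nat.card_congr (Equiv.subtypeEquivRight fun k => ?_)
  rw [eq_sub_iff_add_eq']

end FiberCard

section Box

variable {G ι : Type*} [AddCommGroup G] [Fintype ι]

/-- The box spanned by `e` with side `N`, as a family: its points are counted with multiplicity,
since the `e i` need not be independent. -/
def boxPoint (e : ι → G) (N : ℕ) (k : ι → Fin N) : G := ∑ i, (k i : ℕ) • e i

noncomputable def boxAutocorr (e : ι → G) (N : ℕ) : G → ℝ :=
  discreteAutocorr fun a => (fiberCard (boxPoint e N) a : ℝ)

lemma boxPoint_funSplitAt_symm [DecidableEq ι] (e : ι → G) {N : ℕ} (i : ι)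
    (p : Fin N × ({j // j ≠ i} → Fin N)) :
    boxPoint e N ((Equiv.funSplitAt i (Fin N)).symm p)
      = (p.1 : ℕ) • e i + boxPoint (fun j : {j // j ≠ i} => e j) N p.2 := by
  rw [boxPoint, Fintype.sum_eq_add_sum_subtype_ne _ i]
  simp only [Equiv.funSplitAt_symm_apply, dite_true, boxPoint]
  congr 1
  exact sum_congr rfl fun j _ => by rw [dif_neg j.2]

lemma natCast_mul_boxAutocorr_sub_le (e : ι → G) (N : ℕ) (i : ι) :
    N * (boxAutocorr e N 0 - boxAutocorr e N (e i)) ≤ boxAutocorr e N 0 := by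
  classical
  refine natCast_mul_discreteAutocorr_sub_le
    ((hasFiniteSupport_fiberCard (boxPoint (fun j : {j // j ≠ i} => e j) N)).fun_comp
      (g := ((↑) : ℕ → ℝ)) Nat.cast_zero) (fun a => Nat.cast_nonneg _) fun a => ?_
  rw [← fiberCard_comp_equiv _ (Equiv.funSplitAt i (Fin N)).symm,
    show boxPoint e N ∘ (Equiv.funSplitAt i (Fin N)).symm = _ from
      funext (boxPoint_funSplitAt_symm e i), fiberCard_smul_add]
  push_cast
  rfl

lemma tendsto_boxAutocorr_div (e : ι → G) (i : ι) :
    Tendsto (fun N : ℕ => boxAutocorr e (N + 1) (e i) / boxAutocorr e (N + 1) 0) atTop (𝓝 1) := by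
  classical
  have hlow : Tendsto (fun N : ℕ => 1 - 1 / ((N : ℝ) + 1)) atTop (𝓝 1) := by
    simpa using (tendsto_const_nhds (x := (1 : ℝ))).sub tendsto_one_div_add_atTop_nhds_zero_nat
  refine tendsto_of_tendsto_of_tendsto_of_le_of_le hlow tendsto_const_nhds (fun N => ?_)
    fun N => ?_
  · have hpos : 0 < boxAutocorr e (N + 1) 0 := discreteAutocorr_fiberCard_zero_pos _
    have h := natCast_mul_boxAutocorr_sub_le e (N + 1) i
    push_cast at h
    rw [le_div_iff₀ hpos, sub_mul, one_mul, one_div_mul_eq_div, sub_le_comm,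
      le_div_iff₀ (by positivity)]
    linarith
  · exact div_le_one_of_le₀ (discreteAutocorr_le_discreteAutocorr_zero
      ((hasFiniteSupport_fiberCard _).fun_comp (g := ((↑) : ℕ → ℝ)) Nat.cast_zero) _)
      (discreteAutocorr_fiberCard_zero_pos _).le

end Box

namespace IsPositiveDefiniteOn

variable {G : Type*} [AddCommGroup G] {f : G → ℂ}

lemma sum_fintype_nonneg (hf : IsPositiveDefiniteOn f Set.univ) {I : Type*} [Fintype I]
    (x : I → G) (w : I → ℂ) :
    0 ≤ ∑ k, ∑ l, w k * (starRingEnd ℂ) (w l) * f (x k - x l) := by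
  set σ := (Fintype.equivFin I).symm
  have h := hf _ (x ∘ σ) (fun _ => trivial) (w ∘ σ)
  simp only [Function.comp_apply] at h
  simpa only [σ.sum_comp fun k => ∑ l, w k * (starRingEnd ℂ) (w l) * f (x k - x l),
    fun k => σ.sum_comp fun l => w k * (starRingEnd ℂ) (w l) * f (x k - x l)] using h

lemma finsum_discreteAutocorr_mul_nonneg (hf : IsPositiveDefiniteOn f Set.univ) {I : Type*}
    [Fintype I] (x : I → G) :
    0 ≤ ∑ᶠ t, (discreteAutocorr (fun a => (fiberCard x a : ℝ)) t : ℂ) * f t := by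
  have h := hf.sum_fintype_nonneg x 1
  simp only [Pi.one_apply, map_one, one_mul] at h
  rw [← Fintype.sum_prod_type' (fun k l => f (x k - x l)),
    ← finsum_fiberCard_smul (fun p : I × I => x p.1 - x p.2)] at h
  simpa only [nsmul_eq_mul, ← natCast_fiberCard_sub_eq_discreteAutocorr, Complex.ofReal_natCast] using h

theorem finsum_nonneg (hf : IsPositiveDefiniteOn f Set.univ) (hfin : f.HasFiniteSupport) :
    0 ≤ ∑ᶠ t, f t := by
  classical
  set S := hfin.toFinset
  have hS : ∀ {g : G → ℂ}, support g ⊆ support f → support g ⊆ S := fun h => by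
    rwa [show (S : Set G) = support f from hfin.coe_toFinset]
  set A := fun N : ℕ => boxAutocorr ((↑) : S → G) (N + 1)
  have hlim : Tendsto (fun N => ∑ t ∈ S, ((A N t / A N 0 : ℝ) : ℂ) * f t) atTop
      (𝓝 (∑ t ∈ S, f t)) := by
    refine tendsto_finsetSum _ fun t ht => ?_
    simpa using ((Complex.continuous_ofReal.tendsto 1).comp
      (tendsto_boxAutocorr_div ((↑) : S → G) ⟨t, ht⟩)).mul_const (f t)
  rw [finsum_eq_sum_of_support_subset f (hS subset_rfl)]
  refine ge_of_tendsto' hlim fun N => ?_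
  have hQ := hf.finsum_discreteAutocorr_mul_nonneg (boxPoint ((↑) : S → G) (N + 1))
  rw [finsum_eq_sum_of_support_subset _ (hS (support_mul_subset_right _ _))] at hQ
  calc 0 ≤ (((A N 0)⁻¹ : ℝ) : ℂ) * ∑ t ∈ S, (A N t : ℂ) * f t :=
        mul_nonneg (Complex.zero_le_real.2 (inv_nonneg.2
          (discreteAutocorr_fiberCard_zero_pos _).le)) hQ
    _ = ∑ t ∈ S, ((A N t / A N 0 : ℝ) : ℂ) * f t := by
        rw [mul_sum]
        refine sum_congr rfl fun t _ => ?_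
        push_cast
        ring

end IsPositiveDefiniteOn

section Autocorrelation

variable {G : Type*} [AddCommGroup G] [MeasurableSpace G] (μ : Measure G)

noncomputable def autocorrelation (φ : G → ℂ) : G → ℂ :=
  convolution φ (fun y => (starRingEnd ℂ) (φ (-y))) (ContinuousLinearMap.mul ℂ ℂ) μ

lemma autocorrelation_sub_apply [MeasurableAdd G] [μ.IsAddRightInvariant] (φ : G → ℂ) (a b : G) :
    autocorrelation μ φ (a - b) = ∫ t, φ (t + a) * (starRingEnd ℂ) (φ (t + b)) ∂μ := by
  rw [autocorrelation, convolution_def, ← integral_add_right_eq_self _ a]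
  congr 1 with t
  rw [ContinuousLinearMap.mul_apply', neg_sub, show t + a - (a - b) = t + b by abel]

lemma support_autocorrelation_subset (φ : G → ℂ) :
    support (autocorrelation μ φ) ⊆ support φ - support φ := by
  rw [sub_eq_add_neg]
  refine (support_convolution_subset _).trans (Set.add_subset_add_left fun y hy => ?_)
  simpa using hy

variable [TopologicalSpace G] {φ : G → ℂ}

lemma hasCompactSupport_autocorrelation [IsTopologicalAddGroup G] [T2Space G]
    (hφc : HasCompactSupport φ) : HasCompactSupport (autocorrelation μ φ) :=
  hφc.convolution _ ((hφc.comp_homeomorph (Homeomorph.neg G)).comp_left (map_zero _))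

lemma integrable_mul_conj_comp_add [ContinuousAdd G] [OpensMeasurableSpace G]
    [IsFiniteMeasureOnCompacts μ] (hφ : Continuous φ) (hφc : HasCompactSupport φ) (a b : G) :
    Integrable (fun t => φ (t + a) * (starRingEnd ℂ) (φ (t + b))) μ :=
  ((hφ.comp (continuous_add_const a)).mul (Complex.continuous_conj.comp
    (hφ.comp (continuous_add_const b)))).integrable_of_hasCompactSupport
    ((hφc.comp_homeomorph (Homeomorph.addRight a)).mul_right)

lemma autocorrelation_zero_pos [OpensMeasurableSpace G] [IsFiniteMeasureOnCompacts μ]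
    [MeasurableAdd G] [μ.IsAddRightInvariant] [μ.IsOpenPosMeasure]
    (hφ : Continuous φ) (hφc : HasCompactSupport φ) {x : G} (hx : φ x ≠ 0) :
    0 < autocorrelation μ φ 0 := by
  have h := autocorrelation_sub_apply μ φ 0 0
  simp only [sub_zero, add_zero, Complex.mul_conj] at h
  rw [h, integral_complex_ofReal, Complex.zero_lt_real]
  exact (Complex.continuous_normSq.comp hφ).integral_pos_of_hasCompactSupport_nonneg_nonzero
    (hφc.comp_left (map_zero Complex.normSq)) (fun t => Complex.normSq_nonneg _)
    (Complex.normSq_pos.2 hx).ne'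

lemma autocorrelation_sum_translates [ContinuousAdd G] [OpensMeasurableSpace G]
    [IsFiniteMeasureOnCompacts μ] [MeasurableAdd G] [μ.IsAddRightInvariant]
    (hφ : Continuous φ) (hφc : HasCompactSupport φ) {I : Type*} [Fintype I] (d : I → ℂ)
    (x : I → G) (z : G) :
    autocorrelation μ (fun t => ∑ k, d k * φ (t - x k)) z
      = ∑ k, ∑ l, d k * (starRingEnd ℂ) (d l) * autocorrelation μ φ (z - (x k - x l)) := by
  have hF : ∀ k l, Integrable (fun t => d k * (starRingEnd ℂ) (d l) *
      (φ (t + (z - x k)) * (starRingEnd ℂ) (φ (t + -x l)))) μ := fun k l =>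
    (integrable_mul_conj_comp_add μ hφ hφc _ _).const_mul _
  have hexp : ∀ t, (∑ k, d k * φ (t + z - x k)) * (starRingEnd ℂ) (∑ l, d l * φ (t + 0 - x l))
      = ∑ k, ∑ l, d k * (starRingEnd ℂ) (d l) *
          (φ (t + (z - x k)) * (starRingEnd ℂ) (φ (t + -x l))) := fun t => by
    simp only [map_sum, map_mul, sum_mul_sum, add_zero, add_sub_assoc, ← sub_eq_add_neg]
    exact sum_congr rfl fun k _ => sum_congr rfl fun l _ => by ring
  rw [← sub_zero z, autocorrelation_sub_apply]
  simp_rw [hexp, sub_zero]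
  rw [integral_finsetSum _ fun k _ => integrable_finsetSum _ fun l _ => hF k l]
  refine sum_congr rfl fun k _ => ?_
  rw [integral_finsetSum _ fun l _ => hF k l]
  refine sum_congr rfl fun l _ => ?_
  rw [integral_const_mul, ← autocorrelation_sub_apply, sub_neg_eq_add, sub_add]

lemma exists_support_autocorrelation_subset [IsTopologicalAddGroup G] [LocallyCompactSpace G]
    {W : Set G} (hW : W ∈ 𝓝 (0 : G)) :
    ∃ ψ : G → ℂ, Continuous ψ ∧ HasCompactSupport ψ ∧ ψ 0 ≠ 0 ∧
      support (autocorrelation μ ψ) ⊆ W := by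
  have hsub : ∀ᶠ p in 𝓝 (0 : G) ×ˢ 𝓝 0, p.1 - p.2 ∈ W := by
    rw [← nhds_prod_eq]
    exact (continuous_sub.tendsto ((0 : G), (0 : G))).eventually (by simpa using hW)
  obtain ⟨V, hV, hVW⟩ := (eventually_prod_self_iff (r := fun a b => a - b ∈ W)).1 hsub
  obtain ⟨ψ, hψ0, hψV, hψc, -⟩ := exists_continuous_one_zero_of_isCompact isCompact_singleton
    isOpen_interior.isClosed_compl
    (Set.disjoint_singleton_left.2 fun h => h (mem_interior_iff_mem_nhds.2 hV))
  have hsupp : support (fun t => (ψ t : ℂ)) ⊆ V := fun t ht => by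
    by_contra htV
    exact ht (by simpa using hψV fun h => htV (interior_subset h))
  refine ⟨fun t => (ψ t : ℂ), Complex.continuous_ofReal.comp ψ.continuous,
    hψc.comp_left Complex.ofReal_zero, by simp [show ψ 0 = 1 from hψ0 rfl], ?_⟩
  refine (support_autocorrelation_subset μ _).trans ?_
  rintro _ ⟨a, ha, b, hb, rfl⟩
  exact hVW a (hsupp ha) b (hsupp hb)

lemma IsPositiveDefiniteOn.mul_autocorrelation [ContinuousAdd G] [OpensMeasurableSpace G]
    [IsFiniteMeasureOnCompacts μ] [MeasurableAdd G] [μ.IsAddRightInvariant] {c : G → ℂ}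
    (hc : IsPositiveDefiniteOn c Set.univ) (hφ : Continuous φ) (hφc : HasCompactSupport φ) :
    IsPositiveDefiniteOn (fun z => c z * autocorrelation μ φ z) Set.univ := by
  intro n x _ w
  set F : Fin n → Fin n → G → ℂ := fun k l t =>
    w k * (starRingEnd ℂ) (w l) * c (x k - x l) * (φ (t + x k) * (starRingEnd ℂ) (φ (t + x l)))
  have hF : ∀ k l, Integrable (F k l) μ := fun k l =>
    (integrable_mul_conj_comp_add μ hφ hφc (x k) (x l)).const_mul _
  have hsum : ∑ k, ∑ l, w k * (starRingEnd ℂ) (w l) * (c (x k - x l) * autocorrelation μ φ (x k - x l))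
      = ∫ t, ∑ k, ∑ l, F k l t ∂μ := by
    rw [integral_finsetSum _ fun k _ => integrable_finsetSum _ fun l _ => hF k l]
    refine sum_congr rfl fun k _ => ?_
    rw [integral_finsetSum _ fun l _ => hF k l]
    refine sum_congr rfl fun l _ => ?_
    rw [integral_const_mul, autocorrelation_sub_apply]
    ring
  rw [hsum]
  refine integral_nonneg fun t => (hc n x (fun _ => trivial) fun k => w k * φ (t + x k)).trans_eq ?_
  refine sum_congr rfl fun k _ => sum_congr rfl fun l _ => ?_
  simp only [F, map_mul]
  ring

end Autocorrelation

namespace UniformlyDiscrete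

variable {G : Type*} [AddCommGroup G] [TopologicalSpace G] {Λ : Set G}

lemma finite_inter_of_isCompact [ContinuousAdd G] (hΛ : UniformlyDiscrete Λ) {K : Set G}
    (hK : IsCompact K) : (Λ ∩ K).Finite := by
  obtain ⟨U, hUo, hU0, hU⟩ := hΛ
  obtain ⟨F, hF⟩ := hK.elim_finite_subcover (fun t : G => (t + ·) '' U)
    (fun t => (Homeomorph.addLeft t).isOpenMap U hUo)
    fun z _ => Set.mem_iUnion.2 ⟨z, 0, hU0, add_zero z⟩
  refine (F.finite_toSet.biUnion fun t _ => (hU t).finite).subset fun z hz => ?_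
  obtain ⟨t, ht, hzt⟩ := Set.mem_iUnion₂.1 (hF hz.2)
  exact Set.mem_biUnion ht ⟨hz.1, hzt⟩

lemma eventually_eq_of_sub_eq [T1Space G] (hΛ : UniformlyDiscrete Λ) (d : G) :
    ∀ᶠ w in 𝓝 (0 : G), ∀ z ∈ Λ, z - d = w → z = d := by
  obtain ⟨U, hUo, hU0, hU⟩ := hΛ
  have hmem : ∀ z ∈ Λ, z - d ∈ U → z ∈ Λ ∩ ((d + ·) '' U) := fun z hz hzU =>
    ⟨hz, z - d, hzU, add_sub_cancel d z⟩
  by_cases h : ∃ z₀ ∈ Λ, z₀ - d ∈ U ∧ z₀ ≠ d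
  · obtain ⟨z₀, hz₀, hz₀U, hz₀d⟩ := h
    filter_upwards [hUo.mem_nhds hU0, isOpen_ne.mem_nhds (sub_ne_zero.2 hz₀d).symm]
      with w hwU hwz₀ z hz rfl
    exact (hwz₀ (by rw [hU d (hmem z hz hwU) (hmem z₀ hz₀ hz₀U)])).elim
  · push Not at h
    filter_upwards [hUo.mem_nhds hU0] with w hwU z hz rfl
    exact h z hz hwU

end UniformlyDiscrete

section DiracComb

variable {G : Type*} [AddCommGroup G] [TopologicalSpace G] [IsTopologicalAddGroup G] [T2Space G]
  [MeasurableSpace G] [OpensMeasurableSpace G] [MeasurableAdd G] (μ : Measure G)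
  [IsFiniteMeasureOnCompacts μ] [μ.IsAddRightInvariant] {Λ : Set G} {c : G → ℂ}

theorem diracCombIsPositiveDefinite_of_isPositiveDefiniteOn (hΛ : UniformlyDiscrete Λ)
    (hc0 : ∀ x ∉ Λ, c x = 0) (hc : IsPositiveDefiniteOn c Set.univ) :
    DiracCombIsPositiveDefinite μ c := by
  intro φ hφ hφc
  change 0 ≤ ∑' z, c z * autocorrelation μ φ z
  have hfin : (fun z => c z * autocorrelation μ φ z).HasFiniteSupport :=
    (hΛ.finite_inter_of_isCompact (hasCompactSupport_autocorrelation μ hφc)).subset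
      fun z hz => ⟨by_contra fun hzΛ => hz (by simp [hc0 z hzΛ]),
        subset_tsupport _ (right_ne_zero_of_mul hz)⟩
  rw [tsum_eq_finsum hfin]
  exact (hc.mul_autocorrelation μ hφ hφc).finsum_nonneg hfin

theorem isPositiveDefiniteOn_of_diracCombIsPositiveDefinite [LocallyCompactSpace G]
    [μ.IsOpenPosMeasure] (hΛ : UniformlyDiscrete Λ) (hc0 : ∀ x ∉ Λ, c x = 0)
    (hcomb : DiracCombIsPositiveDefinite μ c) : IsPositiveDefiniteOn c Set.univ := by
  intro n x _ d
  obtain ⟨W, hW, hWΛ⟩ := (eventually_all.2 fun p : Fin n × Fin n =>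
    hΛ.eventually_eq_of_sub_eq (x p.1 - x p.2)).exists_mem
  obtain ⟨ψ, hψ, hψc, hψ0, hψW⟩ := exists_support_autocorrelation_subset μ hW
  have hsingle : ∀ k l, HasSum (fun z => c z * (d k * (starRingEnd ℂ) (d l) *
      autocorrelation μ ψ (z - (x k - x l))))
      (d k * (starRingEnd ℂ) (d l) * c (x k - x l) * autocorrelation μ ψ 0) := by
    intro k l
    convert hasSum_single (x k - x l) fun z hz => ?_ using 1
    · rw [sub_self]; ring
    by_cases hzΛ : z ∈ Λ
    · rw [notMem_support.1 fun h => hz (hWΛ _ (hψW h) (k, l) z hzΛ rfl), mul_zero, mul_zero]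
    · rw [hc0 z hzΛ, zero_mul]
  have hφ : Continuous fun t => ∑ k, d k * ψ (t - x k) :=
    continuous_finsetSum _ fun k _ => continuous_const.mul (hψ.comp (continuous_sub_right _))
  have hφc : HasCompactSupport fun t => ∑ k, d k * ψ (t - x k) := by
    rw [show (fun t => ∑ k, d k * ψ (t - x k)) = ∑ k, fun t => d k * ψ (t - x k) by
      ext; simp [Finset.sum_apply]]
    exact Finset.sum_induction _ HasCompactSupport (fun _ _ => HasCompactSupport.add)
      HasCompactSupport.zero fun k _ => (hψc.comp_homeomorph (Homeomorph.subRight (x k))).mul_left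
  have h := hcomb _ hφ hφc
  change 0 ≤ ∑' z, c z * autocorrelation μ _ z at h
  simp_rw [autocorrelation_sum_translates μ hψ hψc, mul_sum] at h
  rw [(hasSum_sum fun k _ => hasSum_sum fun l _ => hsingle k l).tsum_eq] at h
  simp only [← sum_mul] at h
  exact le_of_mul_le_mul_right (by simpa using h) (autocorrelation_zero_pos μ hψ hψc hψ0)

end DiracComb

theorem posDef_function_iff_diracComb_posDef_general {G : Type*}
    [AddCommGroup G] [TopologicalSpace G] [IsTopologicalAddGroup G]
    [LocallyCompactSpace G] [T2Space G]
    [MeasurableSpace G] [BorelSpace G]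
    (μ : Measure G) [μ.IsAddHaarMeasure]
    (Λ : Set G) (hΛud : UniformlyDiscrete Λ)
    (c : G → ℂ)
    (hc0 : ∀ x ∉ Λ, c x = 0) :
    IsPositiveDefiniteOn c Set.univ ↔ DiracCombIsPositiveDefinite μ c :=
  ⟨diracCombIsPositiveDefinite_of_isPositiveDefiniteOn μ hΛud hc0,
    isPositiveDefiniteOn_of_diracCombIsPositiveDefinite μ hΛud hc0⟩

theorem posDef_function_iff_diracComb_posDef {G : Type*}
    [AddCommGroup G] [TopologicalSpace G] [IsTopologicalAddGroup G]
    [LocallyCompactSpace G] [SecondCountableTopology G] [T2Space G]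
    [MeasurableSpace G] [BorelSpace G]
    (μ : Measure G) [μ.IsAddHaarMeasure]
    (Λ : Set G) (hΛclosed : IsClosed Λ) (hΛud : UniformlyDiscrete Λ)
    (c : G → ℂ) (hcb : ∃ C : ℝ, ∀ x, ‖c x‖ ≤ C)
    (hc0 : ∀ x ∉ Λ, c x = 0) :
    IsPositiveDefiniteOn c Set.univ ↔ DiracCombIsPositiveDefinite μ c :=
  posDef_function_iff_diracComb_posDef_general μ Λ hΛud c hc0
end
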